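/- arXiv:0909.0527 — 4 statements merged into one kernel-verified Lean document; each statement's English description precedes it below -/
import Mathlib

section
/- Let p be an odd prime. In the polynomial ring F_p[X] one has the identity Σ_{s=1}^{p-1} (-1)^{s-1} s^{-1} (X-1)^s = - Σ_{s=1}^{p-1} s^{-1} X^s, where s^{-1} is the inverse of (the image of) s in F_p. -/
/-!
Write `D(x) = Σ_{0<k<p} (C(p,k)/p) xᵏ`, so that `p · D(x) = (x+1)ᵖ - xᵖ - 1`. For odd `p` this gives
`p · D(X-1) = Xᵖ - (X-1)ᵖ - 1 = p · D(-X)` in `ℤ[X]`, hence `D(X-1) = D(-X)`. Reducing mod `p`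
with `C(p,k)/p ≡ (-1)^(k-1)/k`, the left side becomes the sum in `(X-1)ᵏ` and the right side
`Σ (-1)^(k-1) (-1)ᵏ Xᵏ / k = -Σ Xᵏ / k`.
-/

open Polynomial Finset

theorem Nat.Prime.cast_choose_sub_one_eq_neg_one_pow {p : ℕ} (hp : p.Prime) :
    ∀ {k : ℕ}, k < p → ((p - 1).choose k : ZMod p) = (-1) ^ k
  | 0, _ => by simp
  | k + 1, hk => by
    have hpascal : (p - 1).choose k + (p - 1).choose (k + 1) = p.choose (k + 1) := by
      rw [← Nat.choose_succ_succ', Nat.sub_add_cancel hp.one_le]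
    have hvanish : (p.choose (k + 1) : ZMod p) = 0 :=
      (ZMod.natCast_eq_zero_iff _ _).mpr (hp.dvd_choose_self k.succ_ne_zero hk)
    rw [← hpascal, Nat.cast_add, hp.cast_choose_sub_one_eq_neg_one_pow (by omega)] at hvanish
    linear_combination hvanish

theorem Nat.Prime.cast_choose_div_self {p k : ℕ} (hp : p.Prime) (hk₀ : 0 < k) (hk : k < p) :
    ((p.choose k / p : ℕ) : ZMod p) = (-1) ^ (k - 1) * (k : ZMod p)⁻¹ := by
  have : Fact p.Prime := ⟨hp⟩
  have hk_ne : (k : ZMod p) ≠ 0 := by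
    rw [Ne, ZMod.natCast_eq_zero_iff]
    exact fun h => (Nat.le_of_dvd hk₀ h).not_gt hk
  have habsorb : p * (p - 1).choose (k - 1) = p.choose k * k := by
    have := Nat.add_one_mul_choose_eq (p - 1) (k - 1)
    rwa [Nat.sub_add_cancel hp.one_le, Nat.sub_add_cancel hk₀] at this
  have hquot : p.choose k / p * k = (p - 1).choose (k - 1) := by
    rw [Nat.div_mul_right_comm (hp.dvd_choose_self hk₀.ne' hk), ← habsorb,
      Nat.mul_div_cancel_left _ hp.pos]
  rw [eq_mul_inv_iff_mul_eq₀ hk_ne, ← Nat.cast_mul, hquot,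
    hp.cast_choose_sub_one_eq_neg_one_pow (by omega)]

section DividedBinomialSum

variable {R : Type*} [CommRing R]

/-- For prime `p` the divisions `C(p,k) / p` in `ℕ` are exact, as `p ∣ C(p,k)` for `0 < k < p`. -/
def dividedBinomialSum (p : ℕ) (x : R) : R :=
  ∑ k ∈ Ioo 0 p, ((p.choose k / p : ℕ) : R) * x ^ k

theorem natCast_mul_dividedBinomialSum {p : ℕ} (hp : p.Prime) (x : R) :
    (p : R) * dividedBinomialSum p x = (x + 1) ^ p - x ^ p - 1 := by
  rw [add_pow_prime_eq' hp x 1, dividedBinomialSum]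
  simp only [one_pow, mul_one, mul_comm _ (x ^ _)]
  ring

theorem dividedBinomialSum_sub_one {p : ℕ} (hp : p.Prime) (hodd : Odd p) (x : R) :
    dividedBinomialSum p (x - 1) = dividedBinomialSum p (-x) := by
  have hX : dividedBinomialSum p ((X : ℤ[X]) - 1) = dividedBinomialSum p (-X) := by
    refine mul_left_cancel₀ (Nat.cast_ne_zero.mpr hp.ne_zero : (p : ℤ[X]) ≠ 0) ?_
    rw [natCast_mul_dividedBinomialSum hp, natCast_mul_dividedBinomialSum hp, hodd.neg_pow,
      show -(X : ℤ[X]) + 1 = -(X - 1) by ring, hodd.neg_pow]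
    ring
  simpa [dividedBinomialSum] using congrArg (aeval x) hX

end DividedBinomialSum

theorem sum_smul_sub_one_pow {p : ℕ} [Fact p.Prime] (hodd : Odd p) {A : Type*} [CommRing A]
    [Algebra (ZMod p) A] (x : A) :
    ∑ s ∈ Icc 1 (p - 1), ((-1 : ZMod p) ^ (s - 1) * (s : ZMod p)⁻¹) • (x - 1) ^ s
      = -∑ s ∈ Icc 1 (p - 1), (s : ZMod p)⁻¹ • x ^ s := by
  have hp : p.Prime := Fact.out
  have hIcc : Icc 1 (p - 1) = Ioo 0 p := by
    ext
    simp only [mem_Icc, mem_Ioo]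
    omega
  have hcoeff : ∀ s ∈ Ioo 0 p, ∀ y : A,
      ((-1 : ZMod p) ^ (s - 1) * (s : ZMod p)⁻¹) • y = ((p.choose s / p : ℕ) : A) * y := by
    intro s hs y
    obtain ⟨hs₀, hs⟩ := mem_Ioo.mp hs
    rw [← hp.cast_choose_div_self hs₀ hs, Nat.cast_smul_eq_nsmul, nsmul_eq_mul]
  rw [hIcc, ← sum_neg_distrib]
  calc _ = dividedBinomialSum p (x - 1) := sum_congr rfl fun s hs => hcoeff s hs _
    _ = dividedBinomialSum p (-x) := dividedBinomialSum_sub_one hp hodd x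
    _ = _ := sum_congr rfl fun s hs => by
      obtain ⟨t, rfl⟩ : ∃ t, s = t + 1 := ⟨s - 1, by grind⟩
      have hsign : (-1 : ZMod p) ^ t * (-1) ^ t = 1 := by rw [← mul_pow]; simp
      rw [← hcoeff _ hs, ← neg_one_smul (ZMod p) x, _root_.smul_pow, smul_smul, ← neg_smul]
      congr 1
      rw [Nat.add_sub_cancel, pow_succ]
      linear_combination (-((t + 1 : ℕ) : ZMod p)⁻¹) * hsign

/-- Truncated-logarithm identity in `F_p[X]` for an odd prime `p`:
`Σ_{s=1}^{p-1} (-1)^(s-1) s⁻¹ (X-1)^s = - Σ_{s=1}^{p-1} s⁻¹ X^s`. -/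
theorem stmt2 (p : ℕ) (hp : p.Prime) (hodd : Odd p) :
    ∑ s ∈ Finset.Icc 1 (p - 1),
        ((-1 : ZMod p) ^ (s - 1) * (s : ZMod p)⁻¹) • ((X - 1 : (ZMod p)[X]) ^ s)
      = - ∑ s ∈ Finset.Icc 1 (p - 1), (s : ZMod p)⁻¹ • (X : (ZMod p)[X]) ^ s := by
  have : Fact p.Prime := ⟨hp⟩
  exact sum_smul_sub_one_pow hodd X
end

section
/- Let p ≥ 5 and f ≥ 2. The set RD(x) of f-tuples λ = (λ_0(x_0),...,λ_{f-1}(x_{f-1})) satisfying: (i) λ_i(x_i) ∈ {x_i, x_i+1, p-2-x_i, p-3-x_i} for all i; (ii) if λ_i(x_i) ∈ {x_i, x_i+1} then λ_{i+1}(x_{i+1}) ∈ {x_{i+1}, p-2-x_{i+1}}; (iii) if λ_i(x_i) ∈ {p-2-x_i, p-3-x_i} then λ_{i+1}(x_{i+1}) ∈ {p-3-x_{i+1}, x_{i+1}+1}; (with cyclic conventions x_f = x_0, λ_f = λ_0) is in bijection with the power set of {0,...,f-1} via λ ↦ S_λ := {i : λ_i(x_i) ∈ {p-3-x_i, x_i+1}}.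 In particular |RD(x)| = 2^f. -/
/-!
Conditions (ii) and (iii) say that `λ_i` has sign `-1` exactly when `i + 1 ∈ S_λ`, and by
definition `λ_i ∈ {p-3-x_i, x_i+1}` exactly when `i ∈ S_λ`; these two bits pin down `λ_i` among
the four choices. Conversely, for any `S` the tuple `λ_i := rdWeight p (i ∈ S) (i + 1 ∈ S)`
satisfies (i)–(iii) and has `S_λ = S`.
-/

/-- Encode an affine function `a·x + b` as `(a, b) : ℤ × ℤ`; the four possibilities
`x_i, x_i+1, p-2-x_i, p-3-x_i` are `(1,0), (1,1), (-1,p-2), (-1,p-3)`.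
`RDTuple p l` says `l ∈ RD(x_0,…,x_{f-1})` (cyclic conventions, `i+1` in `Fin f`). -/
def RDTuple (p : ℤ) {f : ℕ} [NeZero f] (l : Fin f → ℤ × ℤ) : Prop :=
  (∀ i : Fin f, l i = (1, 0) ∨ l i = (1, 1) ∨ l i = (-1, p - 2) ∨ l i = (-1, p - 3)) ∧
  (∀ i : Fin f, (l i = (1, 0) ∨ l i = (1, 1)) →
      (l (i + 1) = (1, 0) ∨ l (i + 1) = (-1, p - 2))) ∧
  (∀ i : Fin f, (l i = (-1, p - 2) ∨ l i = (-1, p - 3)) →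
      (l (i + 1) = (-1, p - 3) ∨ l (i + 1) = (1, 1)))

/-- `S_λ = {i : λ_i(x_i) ∈ {p-3-x_i, x_i+1}}`. -/
def SLambda (p : ℤ) {f : ℕ} (l : Fin f → ℤ × ℤ) : Set (Fin f) :=
  {i | l i = (-1, p - 3) ∨ l i = (1, 1)}

open Classical in
noncomputable def rdWeight (p : ℤ) (inS nextInS : Prop) : ℤ × ℤ :=
  if nextInS then (if inS then (-1, p - 3) else (-1, p - 2))
  else (if inS then (1, 1) else (1, 0))

namespace RDTuple

variable {p : ℤ} {f : ℕ} [NeZero f]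

open Classical in
noncomputable def ofSet (p : ℤ) (S : Set (Fin f)) : Fin f → ℤ × ℤ :=
  fun i => rdWeight p (i ∈ S) (i + 1 ∈ S)

theorem ofSet_rdTuple (S : Set (Fin f)) : RDTuple p (ofSet p S) := by
  refine ⟨fun i => ?_, fun i h => ?_, fun i h => ?_⟩ <;>
    simp only [ofSet, rdWeight] at * <;> split_ifs at * <;> simp_all [Prod.ext_iff]

theorem sLambda_ofSet (S : Set (Fin f)) : SLambda p (ofSet p S) = S := by
  ext i
  simp only [SLambda, ofSet, rdWeight, Set.mem_ofPred_eq]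
  split_ifs <;> simp_all [Prod.ext_iff]

theorem eq_rdWeight {l : Fin f → ℤ × ℤ} (hl : RDTuple p l) (i : Fin f) :
    l i = rdWeight p (i ∈ SLambda p l) (i + 1 ∈ SLambda p l) := by
  obtain ⟨hvalues, hplus, hminus⟩ := hl
  simp only [SLambda, Set.mem_ofPred_eq]
  rcases hvalues i with h | h | h | h
  · rcases hplus i (by simp [h]) with h' | h' <;> simp [rdWeight, h, h', Prod.ext_iff]
  · rcases hplus i (by simp [h]) with h' | h' <;> simp [rdWeight, h, h', Prod.ext_iff]
  · rcases hminus i (by simp [h]) with h' | h' <;> simp [rdWeight, h, h', Prod.ext_iff]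
  · rcases hminus i (by simp [h]) with h' | h' <;> simp [rdWeight, h, h', Prod.ext_iff]

theorem ofSet_sLambda {l : Fin f → ℤ × ℤ} (hl : RDTuple p l) : ofSet p (SLambda p l) = l :=
  funext fun i => (hl.eq_rdWeight i).symm

noncomputable def equivSet (p : ℤ) : {l : Fin f → ℤ × ℤ // RDTuple p l} ≃ Set (Fin f) where
  toFun l := SLambda p l.1
  invFun S := ⟨ofSet p S, ofSet_rdTuple S⟩
  left_inv l := Subtype.ext (ofSet_sLambda l.2)
  right_inv := sLambda_ofSet

end RDTuple

theorem stmt12_general (p : ℤ) (f : ℕ) [NeZero f] :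
    Function.Bijective
      (fun l : {l : Fin f → ℤ × ℤ // RDTuple p l} => SLambda p l.1) ∧
    Nat.card {l : Fin f → ℤ × ℤ // RDTuple p l} = 2 ^ f := by
  refine ⟨(RDTuple.equivSet p).bijective, ?_⟩
  rw [Nat.card_congr (RDTuple.equivSet p), Nat.card_eq_fintype_card, Fintype.card_set,
    Fintype.card_fin]

/-- For `p ≥ 5`, `f ≥ 2`: the map `λ ↦ S_λ` is a bijection from `RD(x)` onto the
power set of `{0,…,f-1}`; in particular `|RD(x)| = 2^f`. -/
theorem stmt12 (p : ℤ) (f : ℕ) [NeZero f] (hp : 5 ≤ p) (hf : 2 ≤ f) :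
    Function.Bijective
      (fun l : {l : Fin f → ℤ × ℤ // RDTuple p l} => SLambda p l.1) ∧
    Nat.card {l : Fin f → ℤ × ℤ // RDTuple p l} = 2 ^ f :=
  stmt12_general p f
end

section
/- Let p ≥ 5, f ≥ 2, and let λ, λ' ∈ RD(x) (defined by conditions (i)-(iii) in the context). Suppose there exists j ∈ {0,...,f-1} such that S_λ ∩ ({0,...,f-1}\{j-1, j}) = S_{λ'} ∩ ({0,...,f-1}\{j-1, j}) (indices taken mod f). Then λ_i(x_i) = λ'_i(x_i) for every i ∉ {j-2, j-1, j} (indices mod f). -/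
/-!
Each `λ_i` is one of four affine functions, distinguished by two bits: whether `i ∈ S_λ`, and
whether its slope is `-1`. Conditions (ii) and (iii) say exactly that the slope of `λ_i` is `-1`
iff `i + 1 ∈ S_λ`. Hence `λ_i` is determined by the memberships of `i` and `i + 1` in `S_λ`, and
for `i ∉ {j-2, j-1, j}` neither `i` nor `i + 1` lies in `{j-1, j}`.
-/

namespace RDTuple

variable {p : ℤ} {f : ℕ} [NeZero f] {l l' : Fin f → ℤ × ℤ}

theorem slope_eq_neg_one_iff (hl : RDTuple p l) (i : Fin f) :
    (l i).1 = -1 ↔ i + 1 ∈ SLambda p l := by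
  obtain ⟨hvals, hpos, hneg⟩ := hl
  simp only [SLambda, Set.mem_ofPred_eq]
  rcases hvals i with h | h | h | h
  · rcases hpos i (Or.inl h) with h' | h' <;> simp [h, h']
  · rcases hpos i (Or.inr h) with h' | h' <;> simp [h, h']
  · rcases hneg i (Or.inl h) with h' | h' <;> simp [h, h']
  · rcases hneg i (Or.inr h) with h' | h' <;> simp [h, h']

theorem apply_eq_of_mem_iff_of_slope_iff (hl : RDTuple p l) (hl' : RDTuple p l') (i : Fin f)
    (hS : i ∈ SLambda p l ↔ i ∈ SLambda p l') (hslope : (l i).1 = -1 ↔ (l' i).1 = -1) :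
    l i = l' i := by
  simp only [SLambda, Set.mem_ofPred_eq] at hS
  rcases hl.1 i with h | h | h | h <;> rcases hl'.1 i with h' | h' | h' | h' <;>
    simp_all

end RDTuple

theorem stmt13_general (p : ℤ) (f : ℕ) [NeZero f]
    (l l' : Fin f → ℤ × ℤ) (hl : RDTuple p l) (hl' : RDTuple p l') (j : Fin f)
    (hS : ∀ i : Fin f, i ≠ j - 1 → i ≠ j →
        (i ∈ SLambda p l ↔ i ∈ SLambda p l')) :
    ∀ i : Fin f, i ≠ j - 2 → i ≠ j - 1 → i ≠ j → l i = l' i := by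
  intro i hi₂ hi₁ hi₀
  refine hl.apply_eq_of_mem_iff_of_slope_iff hl' i (hS i hi₁ hi₀) ?_
  rw [hl.slope_eq_neg_one_iff, hl'.slope_eq_neg_one_iff]
  exact hS (i + 1) (fun h => hi₂ (by grind)) (fun h => hi₁ (by grind))

/-- If `λ, λ' ∈ RD(x)` and `S_λ`, `S_{λ'}` agree outside `{j-1, j}` (indices mod `f`),
then `λ_i = λ'_i` for every `i ∉ {j-2, j-1, j}`. -/
theorem stmt13 (p : ℤ) (f : ℕ) [NeZero f] (hp : 5 ≤ p) (hf : 2 ≤ f)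
    (l l' : Fin f → ℤ × ℤ) (hl : RDTuple p l) (hl' : RDTuple p l') (j : Fin f)
    (hS : ∀ i : Fin f, i ≠ j - 1 → i ≠ j →
        (i ∈ SLambda p l ↔ i ∈ SLambda p l')) :
    ∀ i : Fin f, i ≠ j - 2 → i ≠ j - 1 → i ≠ j → l i = l' i :=
  stmt13_general p f l l' hl hl' j hS
end

section
/- Let p ≥ 3 be prime, f ≥ 1, q = p^f, and let r_0,...,r_{f-1} be integers with 0 ≤ r_i ≤ p-1, not all equal to p-1, and fix j ∈ {0,...,f-1} with r_j = 1. Assume the r_i for i ≠ j are not all zero, and let j' be the first index after j in the cyclic order such that r_{j'} ≥ 1. Set n = Σ_{i=0}^{f-1} p^i r_i and let n' be the unique representative in {0,...,q-2} of n - 2p^j modulo q-1. Then the base-p digits r'_i of n' satisfy: r'_i = p-1 for i in the cyclic interval {j, j+1,..., j'-1}, r'_{j'} = r_{j'} - 1, and r'_i = r_i for all other i. -/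
open Fin.NatCast

private lemma geomN (p k : ℕ) (hp : 1 ≤ p) :
    ∑ i ∈ Finset.range k, p ^ i * (p - 1) = p ^ k - 1 := by
  induction k with
  | zero => simp
  | succ k ih =>
    have h1 : 1 ≤ p ^ k := Nat.one_le_pow _ _ hp
    have h2 : p ^ k * (p - 1) = p ^ k * p - p ^ k := by
      rw [Nat.mul_sub, mul_one]
    have h3 : p ^ k ≤ p ^ k * p := Nat.le_mul_of_pos_right _ hp
    rw [Finset.sum_range_succ, ih, pow_succ]
    omega

private lemma digit_extract {p : ℕ} (hp : 2 ≤ p) (f : ℕ) (D : ℕ → ℕ) (hD : ∀ i, D i < p)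
    (k : ℕ) (hk : k < f) :
    (∑ i ∈ Finset.range f, p ^ i * D i) / p ^ k % p = D k := by
  have hk1 : k + 1 ≤ f := hk
  have hppos : 0 < p ^ k := pow_pos (by omega) k
  have hsplit : ∑ i ∈ Finset.range f, p ^ i * D i
      = (∑ i ∈ Finset.range k, p ^ i * D i)
        + p ^ k * (D k + p * ∑ i ∈ Finset.range (f - (k+1)), p ^ i * D (k+1+i)) := by
    rw [Finset.range_eq_Ico, ← Finset.sum_Ico_consecutive _ (Nat.zero_le (k+1)) hk1,
      ← Finset.range_eq_Ico, Finset.sum_range_succ, Finset.sum_Ico_eq_sum_range]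
    have h : ∀ i ∈ Finset.range (f - (k+1)), p ^ (k+1+i) * D (k+1+i)
        = p ^ k * (p * (p ^ i * D (k+1+i))) := by
      intro i _
      rw [pow_add, pow_succ]
      ring
    rw [Finset.sum_congr rfl h, ← Finset.mul_sum, ← Finset.mul_sum]
    ring
  have hlow : (∑ i ∈ Finset.range k, p ^ i * D i) < p ^ k := by
    calc ∑ i ∈ Finset.range k, p ^ i * D i
        ≤ ∑ i ∈ Finset.range k, p ^ i * (p - 1) :=
          Finset.sum_le_sum (fun i _ => Nat.mul_le_mul_left _ (by have := hD i; omega))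
      _ = p ^ k - 1 := geomN p k (by omega)
      _ < p ^ k := by omega
  rw [hsplit, Nat.add_mul_div_left _ _ hppos, Nat.div_eq_of_lt hlow, zero_add,
    Nat.add_mul_mod_self_left, Nat.mod_eq_of_lt (hD k)]

/-- Borrow propagation when subtracting `2p^j` with digit `r_j = 1` (Lemma "pour-rj'", case (ii)):
`r : Fin f → ℕ` are the base-`p` digits of `n = Σ p^i r_i` (not all `p-1`), `r j = 1`, and
`j' = j + t` is the first index after `j` in the cyclic order with `r j' ≥ 1` (so `1 ≤ t < f`
and `r (j+s) = 0` for `1 ≤ s < t`). If `n'` is the representative in `{0,…,q-2}` of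
`n - 2p^j` modulo `q - 1`, then the base-`p` digits of `n'` are: `p-1` at the positions
`j, j+1, …, j'-1` (cyclically), `r j' - 1` at position `j'`, and `r i` elsewhere. -/
theorem stmt14 (p f q : ℕ) [NeZero f] (hp : p.Prime) (hp3 : 3 ≤ p) (hf : 1 ≤ f)
    (hq : q = p ^ f) (r : Fin f → ℕ) (hr : ∀ i, r i ≤ p - 1) (hnot : ¬ ∀ i, r i = p - 1)
    (j : Fin f) (hrj : r j = 1)
    (t : ℕ) (ht1 : 1 ≤ t) (htf : t < f)
    (hjt : 1 ≤ r (j + (t : Fin f)))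
    (hmin : ∀ s : ℕ, 1 ≤ s → s < t → r (j + (s : Fin f)) = 0)
    (n n' : ℕ) (hn : n = ∑ i : Fin f, p ^ (i : ℕ) * r i)
    (hn' : n' ≤ q - 2)
    (hcong : (n' : ℤ) ≡ (n : ℤ) - 2 * (p : ℤ) ^ (j : ℕ) [ZMOD ((q : ℤ) - 1)]) :
    (∀ s : ℕ, s < t → n' / p ^ (((j + (s : Fin f)) : Fin f) : ℕ) % p = p - 1) ∧
    n' / p ^ (((j + (t : Fin f)) : Fin f) : ℕ) % p = r (j + (t : Fin f)) - 1 ∧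
    (∀ i : Fin f, (∀ s : ℕ, s ≤ t → i ≠ j + (s : Fin f)) →
        n' / p ^ ((i : Fin f) : ℕ) % p = r i) := by
  have hp1 : 1 ≤ p := by omega
  have hp2 : 2 ≤ p := by omega
  have hq3 : 3 ≤ q := by
    rw [hq]
    calc 3 ≤ p := hp3
      _ ≤ p ^ f := Nat.le_self_pow (by omega) p
  -- new digits
  set d : Fin f → ℕ := fun i =>
    if ((i - j : Fin f) : ℕ) < t then p - 1
    else if ((i - j : Fin f) : ℕ) = t then r (j + (t : Fin f)) - 1
    else r i with hd_def
  have hsub : ∀ s : ℕ, s < f → ((((j + (s : Fin f)) - j : Fin f)) : ℕ) = s := by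
    intro s hs
    have h : (j + (s : Fin f)) - j = (s : Fin f) := by
      rw [add_comm]; exact add_sub_cancel_right _ _
    rw [h, Fin.val_cast_of_lt hs]
  have hd1 : ∀ s : ℕ, s < t → d (j + (s : Fin f)) = p - 1 := by
    intro s hs
    simp only [hd_def]
    rw [hsub s (by omega)]
    simp [hs]
  have hd2 : d (j + (t : Fin f)) = r (j + (t : Fin f)) - 1 := by
    simp only [hd_def]
    rw [hsub t htf]
    simp
  have hd3 : ∀ i : Fin f, (∀ s : ℕ, s ≤ t → i ≠ j + (s : Fin f)) → d i = r i := by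
    intro i hi
    have hieq : i = j + ((((i - j : Fin f)) : ℕ) : Fin f) := by
      rw [Fin.cast_val_eq_self]
      rw [add_comm]
      exact (sub_add_cancel i j).symm
    have hu : ¬ ((i - j : Fin f) : ℕ) ≤ t := fun h => hi _ h hieq
    simp only [hd_def]
    rw [if_neg (by omega), if_neg (by omega)]
  have hdlt : ∀ i, d i < p := by
    intro i
    simp only [hd_def]
    split_ifs with h1 h2
    · omega
    · have := hr (j + (t : Fin f)); omega
    · have := hr i; omega
  -- the candidate m
  set D : ℕ → ℕ := fun i => d ((i : ℕ) : Fin f) with hD_def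
  have hDlt : ∀ i, D i < p := fun i => hdlt _
  set m : ℕ := ∑ i ∈ Finset.range f, p ^ i * D i with hm_def
  have hmfin : m = ∑ i : Fin f, p ^ (i : ℕ) * d i := by
    rw [hm_def, ← Fin.sum_univ_eq_sum_range (fun i => p ^ i * D i) f]
    exact Finset.sum_congr rfl fun i _ => by
      simp only [hD_def, Fin.cast_val_eq_self]
  have hmlt : m < q - 1 := by
    have hsum : ∑ i : Fin f, p ^ (i : ℕ) * d i < ∑ i : Fin f, p ^ (i : ℕ) * (p - 1) := by
      apply Finset.sum_lt_sum
      · intro i _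
        exact Nat.mul_le_mul_left _ (by have := hdlt i; omega)
      · refine ⟨j + (t : Fin f), Finset.mem_univ _, ?_⟩
        refine mul_lt_mul_of_pos_left ?_ (pow_pos (by omega : 0 < p) _)
        rw [hd2]; have := hr (j + (t : Fin f)); omega
    have hsum2 : ∑ i : Fin f, p ^ (i : ℕ) * (p - 1) = q - 1 := by
      rw [Fin.sum_univ_eq_sum_range (fun i => p ^ i * (p - 1)) f, geomN p f hp1, hq]
    rw [hmfin]
    omega
  -- work in ZMod (q-1)
  set Q : ℕ := q - 1 with hQ_def
  haveI : NeZero Q := ⟨by omega⟩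
  have hQcast : ((Q : ℕ) : ℤ) = (q : ℤ) - 1 := by
    rw [hQ_def, Nat.cast_sub (by omega)]; norm_num
  have hpf1 : ((p : ZMod Q) ^ f) = 1 := by
    have h1 : ((q : ℕ) : ZMod Q) = 1 := by
      have : q = Q + 1 := by omega
      rw [this]
      push_cast [ZMod.natCast_self]
      ring
    rw [← h1, hq]
    push_cast
    rfl
  have hpowR : ∀ a : ℕ, (p : ZMod Q) ^ a = (p : ZMod Q) ^ (a % f) := by
    intro a
    conv_lhs => rw [← Nat.div_add_mod a f]
    rw [pow_add, pow_mul, hpf1, one_pow, one_mul]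
  -- the main congruence computation
  have hcalc : (m : ZMod Q) = (n : ZMod Q) - 2 * (p : ZMod Q) ^ (j : ℕ) := by
    have hmR : (m : ZMod Q) = ∑ i : Fin f, (p : ZMod Q) ^ (i : ℕ) * (d i : ZMod Q) := by
      rw [hmfin]; push_cast; rfl
    have hnR : (n : ZMod Q) = ∑ i : Fin f, (p : ZMod Q) ^ (i : ℕ) * (r i : ZMod Q) := by
      rw [hn]; push_cast; rfl
    have hdiff : (m : ZMod Q) - (n : ZMod Q)
        = ∑ i : Fin f, (p : ZMod Q) ^ (i : ℕ) * ((d i : ZMod Q) - (r i : ZMod Q)) := by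
      rw [hmR, hnR, ← Finset.sum_sub_distrib]
      exact Finset.sum_congr rfl fun i _ => by ring
    have hre : ∑ i : Fin f, (p : ZMod Q) ^ (i : ℕ) * ((d i : ZMod Q) - (r i : ZMod Q))
        = ∑ s : Fin f, (p : ZMod Q) ^ (((j + s : Fin f)) : ℕ)
            * ((d (j + s) : ZMod Q) - (r (j + s) : ZMod Q)) := by
      exact (Fintype.sum_equiv (Equiv.addLeft j)
        (fun s => (p : ZMod Q) ^ (((j + s : Fin f)) : ℕ)
            * ((d (j + s) : ZMod Q) - (r (j + s) : ZMod Q)))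
        (fun i => (p : ZMod Q) ^ ((i : Fin f) : ℕ) * ((d i : ZMod Q) - (r i : ZMod Q)))
        (fun s => rfl)).symm
    have hexp : ∀ s : Fin f, (p : ZMod Q) ^ (((j + s : Fin f)) : ℕ)
        = (p : ZMod Q) ^ (j : ℕ) * (p : ZMod Q) ^ (s : ℕ) := by
      intro s
      rw [Fin.val_add, ← hpowR, pow_add]
    set g : ℕ → ZMod Q := fun k => (p : ZMod Q) ^ k
        * ((d (j + (k : Fin f)) : ZMod Q) - (r (j + (k : Fin f)) : ZMod Q)) with hg_def
    have hs2 : ∑ s : Fin f, (p : ZMod Q) ^ (s : ℕ)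
          * ((d (j + s) : ZMod Q) - (r (j + s) : ZMod Q))
        = ∑ k ∈ Finset.range f, g k := by
      rw [← Fin.sum_univ_eq_sum_range g f]
      exact Finset.sum_congr rfl fun s _ => by
        simp only [hg_def, Fin.cast_val_eq_self]
    have hg0 : g 0 = (p : ZMod Q) - 2 := by
      have hdj : d (j + ((0 : ℕ) : Fin f)) = p - 1 := hd1 0 (by omega)
      have hrj' : r (j + ((0 : ℕ) : Fin f)) = 1 := by
        rwa [Nat.cast_zero, add_zero]
      simp only [hg_def, hdj, hrj', pow_zero, one_mul, Nat.cast_sub hp1]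
      push_cast
      ring
    have hgmid : ∀ k : ℕ, 1 ≤ k → k < t → g k = (p : ZMod Q) ^ k * ((p : ZMod Q) - 1) := by
      intro k h1 h2
      simp only [hg_def, hd1 k h2, hmin k h1 h2, Nat.cast_sub hp1]
      push_cast
      ring
    have hgt : g t = -((p : ZMod Q) ^ t) := by
      simp only [hg_def, hd2, Nat.cast_sub hjt]
      push_cast
      ring
    have hgtop : ∀ k : ℕ, t < k → k < f → g k = 0 := by
      intro k hk hkf
      have hne : ∀ s : ℕ, s ≤ t → j + (k : Fin f) ≠ j + (s : Fin f) := by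
        intro s hs heq
        have h1 := add_left_cancel heq
        have hk' : k % f = s % f := by
          have := congrArg Fin.val h1
          simpa [Fin.val_natCast] using this
        rw [Nat.mod_eq_of_lt hkf, Nat.mod_eq_of_lt (by omega : s < f)] at hk'
        omega
      simp only [hg_def, hd3 _ hne, sub_self, mul_zero]
    have hgsum : ∑ k ∈ Finset.range f, g k = -2 := by
      have hss : ∑ k ∈ Finset.range f, g k = ∑ k ∈ Finset.range (t+1), g k := by
        symm
        apply Finset.sum_subset (Finset.range_subset_range.mpr (by omega))
        intro k hk1 hk2
        simp only [Finset.mem_range] at hk1 hk2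
        exact hgtop k (by omega) hk1
      rw [hss, Finset.sum_range_succ, hgt]
      obtain ⟨t', rfl⟩ : ∃ t', t = t' + 1 := ⟨t - 1, by omega⟩
      rw [Finset.sum_range_succ', hg0]
      have he : ∀ i ∈ Finset.range t', g (i+1)
          = (p : ZMod Q) * ((p : ZMod Q) ^ i * ((p : ZMod Q) - 1)) := by
        intro i hi
        simp only [Finset.mem_range] at hi
        rw [hgmid (i+1) (by omega) (by omega), pow_succ]
        ring
      rw [Finset.sum_congr rfl he, ← Finset.mul_sum, ← Finset.sum_mul, geom_sum_mul]
      ring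
    have hMN : (m : ZMod Q) - (n : ZMod Q) = (p : ZMod Q) ^ (j : ℕ) * (-2) := by
      rw [hdiff, hre]
      have hterm : ∀ s : Fin f, (p : ZMod Q) ^ (((j + s : Fin f)) : ℕ)
            * ((d (j + s) : ZMod Q) - (r (j + s) : ZMod Q))
          = (p : ZMod Q) ^ (j : ℕ)
            * ((p : ZMod Q) ^ (s : ℕ) * ((d (j + s) : ZMod Q) - (r (j + s) : ZMod Q))) := by
        intro s; rw [hexp]; ring
      rw [Finset.sum_congr rfl (fun s _ => hterm s), ← Finset.mul_sum, hs2, hgsum]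
    linear_combination hMN
  -- deduce n' = m
  have hn'R : (Int.cast ((n' : ℕ) : ℤ) : ZMod Q)
      = (Int.cast ((n : ℤ) - 2 * (p : ℤ) ^ (j : ℕ)) : ZMod Q) := by
    rw [ZMod.intCast_eq_intCast_iff]
    rwa [hQcast]
  have hmn' : (n' : ZMod Q) = (m : ZMod Q) := by
    push_cast at hn'R
    exact hn'R.trans hcalc.symm
  have heq : n' = m := by
    have h1 := congrArg ZMod.val hmn'
    rwa [ZMod.val_cast_of_lt (by omega : n' < Q), ZMod.val_cast_of_lt (by omega : m < Q)] at h1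
  refine ⟨?_, ?_, ?_⟩
  · intro s hs
    rw [heq, hm_def, digit_extract hp2 f D hDlt _ (Fin.is_lt _)]
    simp only [hD_def, Fin.cast_val_eq_self]
    exact hd1 s hs
  · rw [heq, hm_def, digit_extract hp2 f D hDlt _ (Fin.is_lt _)]
    simp only [hD_def, Fin.cast_val_eq_self]
    exact hd2
  · intro i hi
    rw [heq, hm_def, digit_extract hp2 f D hDlt _ (Fin.is_lt _)]
    simp only [hD_def, Fin.cast_val_eq_self]
    exact hd3 i hi
end
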